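/- arXiv:1411.6226 — 8 statements merged into one kernel-verified Lean document; each statement's English description precedes it below -/
import Mathlib

section
/- Let k,m,c ≥ 0 be integers, let (G,s_1,t_1,…,s_k,t_k) be a problem instance, and let H be its (k,m,c)-tracker. Then every path in H from s_0 to t_0 traces some linkage for (G,s_1,t_1,…,s_k,t_k). -/
open List

/-! Basic digraph/path definitions.  A digraph on `V` is a relation `G : V → V → Prop`
(looplessness is expressed by `Irreflexive G`).  A (directed) path is a nonempty list of
distinct vertices in which consecutive vertices are joined by edges of `G`. -/

/-- `uv` is an edge of the path `P`, i.e. `u,v` are consecutive on `P`. -/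
def PEdge {V : Type} (P : List V) (u v : V) : Prop := [u, v] <:+: P

/-- `P` is a directed path of the digraph `G`. -/
def IsPath {V : Type} (G : V → V → Prop) (P : List V) : Prop :=
  P ≠ [] ∧ P.Nodup ∧ P.Chain' G

/-- `P` is a minimal path of `G`: for every edge `v_i v_j` of `G` between vertices of `P`,
`j ≤ i + 1`. -/
def IsMinimal {V : Type} (G : V → V → Prop) (P : List V) : Prop :=
  ∀ i j : Fin P.length, G (P.get i) (P.get j) → (j : ℕ) ≤ (i : ℕ) + 1

/-- `G` is `d`-path-dominant. -/
def PathDominant {V : Type} (d : ℕ) (G : V → V → Prop) : Prop :=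
  ∀ P : List V, IsPath G P → IsMinimal G P → P.length = d →
    ∀ v : V, v ∈ P ∨ (∃ w ∈ P, G v w) ∨ (∃ w ∈ P, G w v)

/-- A linkage: a tuple of pairwise vertex-disjoint paths. -/
def IsLinkage {V : Type} (G : V → V → Prop) {k : ℕ} (L : Fin k → List V) : Prop :=
  (∀ i, IsPath G (L i)) ∧ ∀ i j : Fin k, i ≠ j → ∀ v, v ∈ L i → v ∉ L j

/-- `v` is `Q`-outward: `v ∉ Q` and no vertex of `Q` is adjacent from `v`. -/
def Outward {V : Type} (G : V → V → Prop) (Q : List V) (v : V) : Prop :=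
  v ∉ Q ∧ ∀ w ∈ Q, ¬ G v w

/-- `v` is `Q`-inward: `v ∉ Q` and no vertex of `Q` is adjacent to `v`. -/
def Inward {V : Type} (G : V → V → Prop) (Q : List V) (v : V) : Prop :=
  v ∉ Q ∧ ∀ w ∈ Q, ¬ G w v

section Inhab
variable {V : Type} [Inhabited V]

/-- A linkage for the problem instance `(G, s₁, t₁, …, s_k, t_k)`. -/
def IsLinkageFor (G : V → V → Prop) {k : ℕ} (s t : Fin k → V) (L : Fin k → List V) : Prop :=
  IsLinkage G L ∧ ∀ i, (L i).head! = s i ∧ (L i).getLast! = t i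

/-- `x` is a quality: there is an `x`-linkage for the instance. -/
def IsQuality (G : V → V → Prop) {k : ℕ} (s t : Fin k → V) (x : Fin k → ℕ) : Prop :=
  ∃ L : Fin k → List V, IsLinkageFor G s t L ∧ ∀ i, (L i).length = x i

/-- `x` is a key quality: a quality not strictly dominating any other quality. -/
def IsKeyQuality (G : V → V → Prop) {k : ℕ} (s t : Fin k → V) (x : Fin k → ℕ) : Prop :=
  IsQuality G s t x ∧ ¬ ∃ y : Fin k → ℕ, IsQuality G s t y ∧ y ≤ x ∧ y ≠ x

/-- `v` is an internal vertex of the linkage `M`. -/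
def Internal {k : ℕ} (M : Fin k → List V) (v : V) : Prop :=
  (∃ i, v ∈ M i) ∧ ∀ i, v ≠ (M i).head! ∧ v ≠ (M i).getLast!

/-- The linkage `M` is internally disjoint from the linkage `L`. -/
def InternallyDisjointFrom {k l : ℕ} (M : Fin k → List V) (L : Fin l → List V) : Prop :=
  ∀ v, Internal M v → ∀ i, v ∉ L i

/-- A planar `(Q,R)`-matching of cardinality `n`. -/
def IsPlanarMatching (G : V → V → Prop) (Q R : List V) {n : ℕ} (M : Fin n → List V) : Prop :=
  IsLinkage G M ∧ (∀ j, (M j).length = 2 ∨ (M j).length = 3) ∧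
  (List.ofFn fun j => (M j).head!).Sublist Q ∧
  (List.ofFn fun j => (M j).getLast!).Sublist R

/-- A planar `(Q,R)`-matching is `s`-spaced. -/
def SSpaced (Q R : List V) {n : ℕ} (M : Fin n → List V) (s : ℕ) : Prop :=
  (∀ W : List V, W <:+: Q → W.length ≤ s →
    ∀ j j' : Fin n, (∃ v ∈ W, v ∈ M j) → (∃ v ∈ W, v ∈ M j') → j = j') ∧
  (∀ W : List V, W <:+: R → W.length ≤ s →
    ∀ j j' : Fin n, (∃ v ∈ W, v ∈ M j) → (∃ v ∈ W, v ∈ M j') → j = j')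

/-- `A(L)`: vertices outside `V(L)` that are `(M_j ∖ t(M_j))`-inward for some `j`
with `t(M_j) ≠ t_j`. -/
def RailA (G : V → V → Prop) {k : ℕ} (t : Fin k → V) (L : Fin k → List V) : Set V :=
  {v | (∀ i, v ∉ L i) ∧ ∃ j, (L j).getLast! ≠ t j ∧ ∀ w ∈ (L j).dropLast, ¬ G w v}

/-- `B(L)`: vertices outside `V(L)` that are `(M_j ∖ s(M_j))`-outward for some `j`
with `s(M_j) ≠ s_j`. -/
def RailB (G : V → V → Prop) {k : ℕ} (s : Fin k → V) (L : Fin k → List V) : Set V :=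
  {v | (∀ i, v ∉ L i) ∧ ∃ j, (L j).head! ≠ s j ∧ ∀ w ∈ (L j).tail, ¬ G v w}

/-- The confusion of the linkage `L`, namely `|A(L) ∩ B(L)|`. -/
noncomputable def Confusion (G : V → V → Prop) {k : ℕ} (s t : Fin k → V)
    (L : Fin k → List V) : ℕ :=
  (RailA G t L ∩ RailB G s L).ncard

/-- `(L, X, Y)` is a `(k,m,c)`-rail in the problem instance. -/
def IsRail (G : V → V → Prop) {k : ℕ} (s t : Fin k → V) (m c : ℕ)
    (L : Fin k → List V) (X Y : Set V) : Prop :=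
  IsLinkage G L ∧
  (∀ j, (L j).length ≤ 2*m ∧
    ((L j).length < 2*m → (L j).head! = s j ∨ (L j).getLast! = t j)) ∧
  Confusion G s t L ≤ c ∧
  Disjoint X Y ∧
  X ⊆ RailA G t L ∧ Y ⊆ RailB G s L ∧ X ∪ Y = RailA G t L ∪ RailB G s L

end Inhab

/-- The data of a potential rail: a `k`-tuple of paths together with two vertex sets. -/
abbrev RailT (V : Type) (k : ℕ) := (Fin k → List V) × Set V × Set V

section Inhab2
variable {V : Type} [Inhabited V]

/-- The edge relation `(L,X,Y) → (L',X',Y')` between distinct rails. -/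
def RailStep (G : V → V → Prop) {k : ℕ} (r r' : RailT V k) : Prop :=
  r ≠ r' ∧
  (∀ i, ∃ W : List V, IsPath G W ∧ W.head! = (r.1 i).head! ∧
    W.getLast! = (r'.1 i).getLast! ∧
    (∀ v, v ∈ W ↔ v ∈ r.1 i ∨ v ∈ r'.1 i) ∧
    (∀ u v, PEdge W u v ↔ PEdge (r.1 i) u v ∨ PEdge (r'.1 i) u v)) ∧
  (∀ i, ∀ v ∈ r'.1 i, v ∈ r.1 i ∨ v ∈ r.2.1) ∧
  (∀ i, ∀ v ∈ r.1 i, v ∈ r'.1 i ∨ v ∈ r'.2.2) ∧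
  r'.2.1 ⊆ r.2.1 ∧ r.2.2 ⊆ r'.2.2

/-- A path from `s₀` to `t₀` in the `(k,m,c)`-tracker, recorded by its list of
intermediate rail vertices. -/
def IsTrackerPath (G : V → V → Prop) {k : ℕ} (s t : Fin k → V) (m c : ℕ)
    (rs : List (RailT V k)) : Prop :=
  rs ≠ [] ∧ rs.Nodup ∧ rs.Chain' (RailStep G) ∧
  (∀ r ∈ rs, IsRail G s t m c r.1 r.2.1 r.2.2) ∧
  (∀ r ∈ rs.head?, ∀ j, (r.1 j).head! = s j) ∧
  (∀ r ∈ rs.getLast?, ∀ j, (r.1 j).getLast! = t j)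

end Inhab2

/-- A tracker path traces the linkage `P`: each `P j` is the union (as a digraph) of the
`j`-th members of the rails of the path. -/
def Traces {V : Type} {k : ℕ} (rs : List (RailT V k)) (P : Fin k → List V) : Prop :=
  ∀ j, (∀ v, v ∈ P j ↔ ∃ r ∈ rs, v ∈ r.1 j) ∧
       (∀ u v, PEdge (P j) u v ↔ ∃ r ∈ rs, PEdge (r.1 j) u v)

section Dec
variable {V : Type} [DecidableEq V]

/-- `V(L)`, the set of vertices of the linkage `L`, as a finset. -/
def LV {k : ℕ} (L : Fin k → List V) : Finset V :=
  Finset.univ.biUnion fun i => (L i).toFinset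

/-- `B` is acceptable for the linkage `L` (with parameters `d, k`). -/
def Acceptable [Inhabited V] (G : V → V → Prop) (d k : ℕ) (L : Fin k → List V)
    (B : Finset V) : Prop :=
  (∀ j : Fin k, ∀ u v : V, PEdge (L j) u v → v ∈ B → u ∈ B) ∧
  ∀ i j : Fin k, ¬ ∃ M : Fin ((k-1)*d + k^2 + 2) → List V,
    IsPlanarMatching G ((L i).filter (· ∈ B)) ((L j).filter (· ∉ B)) M ∧
    InternallyDisjointFrom M L

/-- Labels along a tracker path, after the first rail: consecutive rails `r, r'`
contribute `|V(M'_j) ∖ V(M_j)|` in coordinate `j`. -/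
def labelFrom {k : ℕ} : RailT V k → List (RailT V k) → (Fin k → ℕ)
  | _, [] => fun _ => 0
  | r, r' :: rest => (fun j => ((r'.1 j).toFinset \ (r.1 j).toFinset).card) + labelFrom r' rest

/-- The total label `l(P)` of a tracker path with rail list `rs`: the edge from `s₀`
contributes `|V(M_j)|`, each rail-to-rail edge contributes the difference counts, and the
edge to `t₀` contributes `0`. -/
def pathLabel {k : ℕ} : List (RailT V k) → (Fin k → ℕ)
  | [] => fun _ => 0
  | r :: rest => (fun j => (r.1 j).toFinset.card) + labelFrom r rest

/-- `Q_{p,j}`: the maximal subpath of `P` with at most `m` vertices whose last vertex is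
the last vertex of `P` among `v_1, …, v_p` (null if there is none). -/
def Qseg (m : ℕ) (e : List V) (p : ℕ) (P : List V) : List V :=
  (P.filter (· ∈ e.take p)).drop ((P.filter (· ∈ e.take p)).length - m)

/-- `R_{p,j}`: the maximal subpath of `P` with at most `m` vertices whose first vertex is
the first vertex of `P` among `v_{p+1}, …, v_n` (null if there is none). -/
def Rseg (m : ℕ) (e : List V) (p : ℕ) (P : List V) : List V :=
  (P.filter (· ∈ e.drop p)).take m

/-- `M_{p,j} = Q_{p,j} ∪ R_{p,j}` (together with the connecting edge of `P` when both
are non-null). -/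
def Mseg (m : ℕ) (e : List V) (p : ℕ) (P : List V) : List V :=
  Qseg m e p P ++ Rseg m e p P

end Dec

/-!
Consecutive rails `(L, X, Y) → (L', X', Y')` of a tracker path have `M_j ∪ M'_j` a path ending
with `M'_j`, so it reads `S_j ++ M'_j` where `S_j` is the part of `M_j` that is dropped. Gluing
the pieces `S_{1,j} ++ S_{2,j} ++ ⋯ ++ M_{n,j}` gives a path from `s_j` to `t_j` with exactly
the vertices and edges of the `M_{p,j}`. Along the tracker path the sets `X` only shrink and
every new vertex of a rail comes from the `X` of its predecessor; as `X` avoids `V(L)`, a vertex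
dropped from `M_j` never reappears (so the glued path repeats no vertex) and no vertex ever
changes coordinate (so the glued paths are disjoint).
-/

section PEdge
variable {α : Type} {u v : α}

theorem pedge_append {X Y : List α} :
    PEdge (X ++ Y) u v ↔
      PEdge X u v ∨ PEdge Y u v ∨ (X.getLast? = some u ∧ Y.head? = some v) := by
  rw [PEdge, PEdge, PEdge, infix_append_iff_ne_nil, ← singleton_suffix_iff_getLast?_eq_some,
    ← singleton_prefix_iff_head?_eq_some]
  refine or_congr_right (or_congr_right ⟨?_, fun h => ⟨[u], [v], by simp, by simp, rfl, h⟩⟩)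
  rintro ⟨l₁, l₂, h₁, h₂, huv, hX, hY⟩
  obtain ⟨rfl, rfl⟩ : l₁ = [u] ∧ l₂ = [v] := by
    rcases l₁ with _ | ⟨a, _ | ⟨b, l₁⟩⟩ <;> simp_all
  exact ⟨hX, hY⟩

theorem pedge_reverse {l : List α} : PEdge l.reverse u v ↔ PEdge l v u := by
  simpa [PEdge] using reverse_infix (l₁ := [v, u]) (l₂ := l)

theorem pedge_append_iff_of_head?_eq {S B P : List α} (hhead : B.head? = P.head?)
    (hBP : ∀ u v, PEdge B u v → PEdge P u v) :
    PEdge (S ++ P) u v ↔ PEdge (S ++ B) u v ∨ PEdge P u v := by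
  rw [pedge_append, pedge_append, hhead]
  have := hBP u v
  tauto

/-- In a list without repetitions every entry has at most one successor. -/
theorem prefix_of_forall_pedge {A W : List α} (hW : W.Nodup) (hA : A.Nodup)
    (hhead : A.head? = W.head?) (hedge : ∀ u v, PEdge A u v → PEdge W u v) : A <+: W := by
  induction A generalizing W with
  | nil => exact nil_prefix
  | cons x A ih =>
    obtain ⟨W, rfl⟩ : ∃ W', W = x :: W' := ⟨W.tail, eq_cons_of_mem_head? hhead.symm⟩
    have hx : x ∉ W := (nodup_cons.1 hW).1
    have hedge' : ∀ u v, PEdge (x :: A) u v → PEdge W u v ∨ (u = x ∧ W.head? = some v) := by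
      intro u v h
      rcases pedge_append.1 (show PEdge ([x] ++ W) u v from hedge u v h) with h | h | ⟨hu, hv⟩
      · simpa using (show [u, v] <:+: [x] from h).length_le
      · exact Or.inl h
      · exact Or.inr ⟨by simpa [eq_comm] using hu, hv⟩
    rw [cons_prefix_cons]
    refine ⟨rfl, ?_⟩
    rcases A with _ | ⟨y, A⟩
    · exact nil_prefix
    refine ih hW.of_cons hA.of_cons ?_ fun u v h => ?_
    · rcases hedge' x y ⟨[], A, rfl⟩ with h | ⟨-, h⟩
      · exact absurd (h.subset (by simp)) hx
      · exact h.symm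
    · rcases hedge' u v (h.trans (suffix_cons x _).isInfix) with h | ⟨rfl, -⟩
      · exact h
      · exact absurd (h.subset (by simp)) (nodup_cons.1 hA).1

theorem suffix_of_forall_pedge {B W : List α} (hW : W.Nodup) (hB : B.Nodup)
    (hlast : B.getLast? = W.getLast?) (hedge : ∀ u v, PEdge B u v → PEdge W u v) : B <:+ W := by
  rw [← reverse_prefix]
  refine prefix_of_forall_pedge (nodup_reverse.2 hW) (nodup_reverse.2 hB)
    (by simpa using hlast) fun u v h => ?_
  rw [pedge_reverse] at h ⊢
  exact hedge v u h

theorem head?_eq_of_head!_eq [Inhabited α] {l l' : List α} (hl : l ≠ []) (hl' : l' ≠ [])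
    (h : l.head! = l'.head!) : l.head? = l'.head? := by
  rw [Option.mem_def.1 (head!_mem_head? hl), Option.mem_def.1 (head!_mem_head? hl'), h]

theorem getLast?_eq_of_getLast!_eq [Inhabited α] {l l' : List α} (hl : l ≠ []) (hl' : l' ≠ [])
    (h : l.getLast! = l'.getLast!) : l.getLast? = l'.getLast? := by
  simp_all [getLast?_eq_some_getLast]

theorem IsPath.append_of_head?_eq {G : α → α → Prop} {S B P : List α}
    (hSB : IsPath G (S ++ B)) (hP : IsPath G P) (hhead : B.head? = P.head?)
    (hdisj : ∀ v ∈ S, v ∉ P) : IsPath G (S ++ P) := by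
  obtain ⟨-, hnodup, hchain⟩ := hSB
  obtain ⟨hS, -, -⟩ := nodup_append.1 hnodup
  obtain ⟨hSchain, -, hjoin⟩ := isChain_append.1 hchain
  refine ⟨by simp [hP.1], nodup_append.2 ⟨hS, hP.2.1, ?_⟩,
    isChain_append.2 ⟨hSchain, hP.2.2, ?_⟩⟩
  · rintro a ha b hb rfl
    exact hdisj a ha hb
  · rw [← hhead]
    exact hjoin

end PEdge

section Rails
variable {V : Type} {k : ℕ}

/-- The transitive part of `RailStep`. -/
def RailPrecedes (r r' : RailT V k) : Prop :=
  r'.2.1 ⊆ r.2.1 ∧ ∀ j, ∀ v ∈ r'.1 j, v ∈ r.1 j ∨ v ∈ r.2.1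

theorem RailPrecedes.trans {r r' r'' : RailT V k} (h : RailPrecedes r r')
    (h' : RailPrecedes r' r'') : RailPrecedes r r'' := by
  refine ⟨h'.1.trans h.1, fun j v hv => ?_⟩
  rcases h'.2 j v hv with hv | hv
  · exact h.2 j v hv
  · exact Or.inr (h.1 hv)

instance : Trans (@RailPrecedes V k) RailPrecedes RailPrecedes := ⟨RailPrecedes.trans⟩

theorem RailStep.railPrecedes [Inhabited V] {G : V → V → Prop} {r r' : RailT V k}
    (h : RailStep G r r') : RailPrecedes r r' :=
  ⟨h.2.2.2.2.1, h.2.2.1⟩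

theorem List.IsChain.pairwise_railPrecedes [Inhabited V] {G : V → V → Prop}
    {rs : List (RailT V k)} (h : rs.IsChain (RailStep G)) : rs.Pairwise RailPrecedes :=
  (h.imp fun _ _ => RailStep.railPrecedes).pairwise

theorem RailPrecedes.notMem_of_notMem {r r' r'' : RailT V k} {j : Fin k} {v : V}
    (h : RailPrecedes r r') (h' : RailPrecedes r' r'') (hX : ∀ v ∈ r.2.1, v ∉ r.1 j)
    (hv : v ∈ r.1 j) (hv' : v ∉ r'.1 j) : v ∉ r''.1 j := fun hv'' =>
  (h'.2 j v hv'').elim hv' fun hvX => hX v (h.1 hvX) hv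

theorem IsRail.notMem_of_mem_left [Inhabited V] {G : V → V → Prop} {s t : Fin k → V}
    {m c : ℕ} {L : Fin k → List V} {X Y : Set V} (h : IsRail G s t m c L X Y) {v : V}
    (hv : v ∈ X) (i : Fin k) : v ∉ L i :=
  (h.2.2.2.2.1 hv).1 i

theorem notMem_of_ne_of_isChain_railStep [Inhabited V] {G : V → V → Prop} {s t : Fin k → V}
    {m c : ℕ} {rs : List (RailT V k)} (hchain : rs.IsChain (RailStep G))
    (hrail : ∀ r ∈ rs, IsRail G s t m c r.1 r.2.1 r.2.2) :
    ∀ ra ∈ rs, ∀ rb ∈ rs, ∀ i j, i ≠ j → ∀ v ∈ ra.1 i, v ∉ rb.1 j := by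
  let R : RailT V k → RailT V k → Prop := fun ra rb =>
    ∀ i j, i ≠ j → ∀ v ∈ ra.1 i, v ∉ rb.1 j
  have : Std.Symm R := ⟨fun _ _ h i j hij v hvi hvj => h j i hij.symm v hvj hvi⟩
  refine Pairwise.forall_of_forall (R := R) (fun r hr => (hrail r hr).1.2) ?_
  refine hchain.pairwise_railPrecedes.imp_of_mem fun {ra _} hra _ hprec i j hij v hvi hvj => ?_
  rcases hprec.2 j v hvj with hv | hv
  · exact (hrail ra hra).1.2 i j hij v hvi hv
  · exact (hrail ra hra).notMem_of_mem_left hv i hvi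

theorem RailStep.exists_append_eq [Inhabited V] {G : V → V → Prop} {r r' : RailT V k}
    (h : RailStep G r r') (j : Fin k) (hA : IsPath G (r.1 j)) (hB : IsPath G (r'.1 j)) :
    ∃ S : List V, IsPath G (S ++ r'.1 j) ∧ (S ++ r'.1 j).head? = (r.1 j).head? ∧
      (∀ v, v ∈ S ↔ v ∈ r.1 j ∧ v ∉ r'.1 j) ∧
      (∀ u v, PEdge (S ++ r'.1 j) u v ↔ PEdge (r.1 j) u v ∨ PEdge (r'.1 j) u v) := by
  obtain ⟨W, hW, hWhead, hWlast, hWmem, hWedge⟩ := h.2.1 j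
  obtain ⟨S, rfl⟩ : r'.1 j <:+ W := suffix_of_forall_pedge hW.2.1 hB.2.1
    (getLast?_eq_of_getLast!_eq hB.1 hW.1 hWlast.symm) fun u v h => (hWedge u v).2 (Or.inr h)
  have hSB : ∀ v ∈ S, v ∉ r'.1 j := fun v hv hv' => (nodup_append.1 hW.2.1).2.2 v hv v hv' rfl
  refine ⟨S, hW, head?_eq_of_head!_eq hW.1 hA.1 hWhead, fun v => ⟨fun hv => ?_, fun hv => ?_⟩,
    hWedge⟩
  · exact ⟨((hWmem v).1 (mem_append_left _ hv)).resolve_right (hSB v hv), hSB v hv⟩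
  · exact (mem_append.1 ((hWmem v).2 (Or.inl hv.1))).resolve_right hv.2

theorem exists_path_of_isChain_railStep [Inhabited V] {G : V → V → Prop}
    (j : Fin k) {rs : List (RailT V k)} (hne : rs ≠ []) (hchain : rs.IsChain (RailStep G))
    (hpath : ∀ r ∈ rs, IsPath G (r.1 j)) (hX : ∀ r ∈ rs, ∀ v ∈ r.2.1, v ∉ r.1 j) :
    ∃ P : List V, IsPath G P ∧
      (∀ r ∈ rs.head?, P.head? = (r.1 j).head?) ∧
      (∀ r ∈ rs.getLast?, P.getLast? = (r.1 j).getLast?) ∧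
      (∀ v, v ∈ P ↔ ∃ r ∈ rs, v ∈ r.1 j) ∧
      (∀ u v, PEdge P u v ↔ ∃ r ∈ rs, PEdge (r.1 j) u v) := by
  induction rs with
  | nil => exact absurd rfl hne
  | cons r rest ih =>
    rcases rest with _ | ⟨r', rest⟩
    · exact ⟨r.1 j, hpath r mem_cons_self, by simp, by simp, by simp, by simp⟩
    obtain ⟨P', hP', hP'head, hP'last, hP'mem, hP'edge⟩ := ih (cons_ne_nil _ _) hchain.tail
      (fun r hr => hpath r (mem_cons_of_mem _ hr)) (fun r hr => hX r (mem_cons_of_mem _ hr))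
    simp only [head?_cons, Option.mem_def, Option.some.injEq, forall_eq'] at hP'head ⊢
    rw [getLast?_cons_cons]
    have hstep := (isChain_cons_cons.1 hchain).1
    obtain ⟨S, hSB, hSBhead, hS, hSBedge⟩ := hstep.exists_append_eq j (hpath r mem_cons_self)
      (hpath r' (mem_cons_of_mem _ mem_cons_self))
    have hSP' : ∀ v ∈ S, v ∉ P' := by
      intro v hv hvP'
      obtain ⟨r'', hr'', hv''⟩ := (hP'mem v).1 hvP'
      rcases mem_cons.1 hr'' with rfl | hr''
      · exact ((hS v).1 hv).2 hv''
      · exact hstep.railPrecedes.notMem_of_notMem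
          (rel_of_pairwise_cons hchain.tail.pairwise_railPrecedes hr'')
          (hX r mem_cons_self) ((hS v).1 hv).1 ((hS v).1 hv).2 hv''
    have hBP' : ∀ u v, PEdge (r'.1 j) u v → PEdge P' u v := fun u v h =>
      (hP'edge u v).2 ⟨r', mem_cons_self, h⟩
    refine ⟨S ++ P', hSB.append_of_head?_eq hP' hP'head.symm hSP', ?_, fun r'' hr'' => ?_,
      fun v => ?_, fun u v => ?_⟩
    · rw [head?_append, hP'head, ← head?_append, hSBhead]
    · rw [getLast?_append_of_ne_nil _ hP'.1, hP'last r'' hr'']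
    · rw [exists_mem_cons_iff, ← hP'mem, mem_append, hS]
      by_cases hv : v ∈ r'.1 j
      · simp only [hv, (hP'mem v).2 ⟨r', mem_cons_self, hv⟩]
        tauto
      · tauto
    · rw [exists_mem_cons_iff, ← hP'edge, pedge_append_iff_of_head?_eq hP'head.symm hBP',
        hSBedge]
      have := hBP' u v
      tauto

end Rails

theorem stmt3_general {V : Type} [Inhabited V]
    (G : V → V → Prop)
    (k m c : ℕ) (s t : Fin k → V)
    (rs : List (RailT V k)) (hrs : IsTrackerPath G s t m c rs) :
    ∃ P : Fin k → List V, IsLinkageFor G s t P ∧ Traces rs P := by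
  obtain ⟨hne, -, hchain, hrail, hhead, hlast⟩ := hrs
  choose P hpath hPhead hPlast hmem hedge using fun j =>
    exists_path_of_isChain_railStep j hne hchain (fun r hr => (hrail r hr).1.1 j)
      fun r hr _ hv => (hrail r hr).notMem_of_mem_left hv j
  obtain ⟨r₀, hr₀⟩ := Option.ne_none_iff_exists'.1 (head?_eq_none_iff.not.2 hne)
  obtain ⟨r₁, hr₁⟩ := Option.ne_none_iff_exists'.1 (getLast?_eq_none_iff.not.2 hne)
  refine ⟨P, ⟨⟨hpath, fun i j hij v hvi hvj => ?_⟩, fun j => ⟨?_, ?_⟩⟩,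
    fun j => ⟨hmem j, hedge j⟩⟩
  · obtain ⟨ra, hra, hva⟩ := (hmem i v).1 hvi
    obtain ⟨rb, hrb, hvb⟩ := (hmem j v).1 hvj
    exact notMem_of_ne_of_isChain_railStep hchain hrail ra hra rb hrb i j hij v hva hvb
  · rw [head!_eq_head?_getD, hPhead j r₀ hr₀, ← head!_eq_head?_getD]
    exact hhead r₀ hr₀ j
  · rw [getLast!_eq_getLast?_getD, hPlast j r₁ hr₁, ← getLast!_eq_getLast?_getD]
    exact hlast r₁ hr₁ j

theorem stmt3 {V : Type} [Fintype V] [DecidableEq V] [Inhabited V]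
    (G : V → V → Prop) (hG : Irreflexive G)
    (k m c : ℕ) (s t : Fin k → V)
    (rs : List (RailT V k)) (hrs : IsTrackerPath G s t m c rs) :
    ∃ P : Fin k → List V, IsLinkageFor G s t P ∧ Traces rs P :=
  stmt3_general G k m c s t rs hrs
end

section
/- Let (G,s_1,t_1,…,s_k,t_k) be a problem instance, let x be a key quality of it, and let (P_1,…,P_k) be an x-linkage for (G,s_1,t_1,…,s_k,t_k). Then for each j with 1 ≤ j ≤ k, the path P_j is a minimal path of G; that is, if P_j has vertices v_1,…,v_n in order, then j' ≤ i'+1 for every edge v_{i'}v_{j'} of G with 1 ≤ i',j' ≤ n. -/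
open List

/-! If `P_j` had an edge `v_a v_b` of `G` with `b > a + 1`, short-circuiting `P_j` along it
would give a linkage for the same instance whose quality is strictly below `x` in coordinate
`j` and equal to `x` elsewhere, contradicting that `x` is key. -/

namespace List

variable {α : Type*}

theorem take_append_drop_sublist (l : List α) {m n : ℕ} (h : m ≤ n) :
    l.take m ++ l.drop n <+ l := by
  calc l.take m ++ l.drop n
      <+ l.take m ++ l.drop m := (drop_sublist_drop_left l h).append_left _
    _ = l := take_append_drop m l

theorem head?_take_succ_append_drop (l : List α) (a b : ℕ) :
    (l.take (a + 1) ++ l.drop b).head? = l.head? := by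
  cases l with
  | nil => simp
  | cons _ _ => simp

theorem getLast?_take_append_drop (l : List α) (a : ℕ) {b : ℕ} (hb : b < l.length) :
    (l.take a ++ l.drop b).getLast? = l.getLast? :=
  (getLast?_append_of_ne_nil _ (by simpa using hb)).trans (by simp [getLast?_drop]; omega)

end List

namespace IsPath

variable {V : Type} {G : V → V → Prop} {P : List V}

theorem take_succ_append_drop (hP : IsPath G P) {a b : ℕ} (hab : a + 1 ≤ b)
    (hb : b < P.length) (hadj : G P[a] P[b]) : IsPath G (P.take (a + 1) ++ P.drop b) := by
  obtain ⟨hne, hnodup, hchain⟩ := hP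
  refine ⟨by simp [hne], hnodup.sublist (P.take_append_drop_sublist hab), ?_⟩
  refine isChain_append.2 ⟨hchain.take _, hchain.drop _, ?_⟩
  intro u hu v hv
  simp only [getLast?_take, head?_drop, Nat.add_sub_cancel, getElem?_eq_getElem hb,
    getElem?_eq_getElem (by omega : a < P.length)] at hu hv
  simp_all

theorem exists_shorter_of_not_isMinimal (hP : IsPath G P) (hmin : ¬ IsMinimal G P) :
    ∃ Q, IsPath G Q ∧ Q <+ P ∧ Q.head? = P.head? ∧ Q.getLast? = P.getLast? ∧
      Q.length < P.length := by
  simp only [IsMinimal, not_forall, not_le, exists_prop] at hmin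
  obtain ⟨a, b, hadj, hab⟩ := hmin
  refine ⟨P.take (a + 1) ++ P.drop b, hP.take_succ_append_drop hab.le b.isLt hadj,
    P.take_append_drop_sublist hab.le, P.head?_take_succ_append_drop a b,
    P.getLast?_take_append_drop _ b.isLt, ?_⟩
  simp only [length_append, length_take, length_drop]
  omega

end IsPath

section Linkage

variable {V : Type} [Inhabited V] {G : V → V → Prop} {k : ℕ} {s t : Fin k → V}
  {L : Fin k → List V} {x : Fin k → ℕ}

theorem IsLinkageFor.update_of_sublist (hL : IsLinkageFor G s t L) {j : Fin k} {Q : List V}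
    (hQ : IsPath G Q) (hsub : Q <+ L j) (hhead : Q.head? = (L j).head?)
    (hlast : Q.getLast? = (L j).getLast?) : IsLinkageFor G s t (Function.update L j Q) := by
  obtain ⟨⟨hpaths, hdisj⟩, hends⟩ := hL
  have hmem : ∀ i v, v ∈ Function.update L j Q i → v ∈ L i := by
    intro i v hv
    rcases eq_or_ne i j with rfl | hij
    · exact hsub.subset (by simpa using hv)
    · simpa [hij] using hv
  refine ⟨⟨fun i => ?_, fun i i' hii' v hv hv' =>
    hdisj i i' hii' v (hmem i v hv) (hmem i' v hv')⟩, fun i => ?_⟩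
  · rcases eq_or_ne i j with rfl | hij
    · simpa using hQ
    · simpa [hij] using hpaths i
  · rcases eq_or_ne i j with rfl | hij
    · simpa [head!_eq_head?_getD, getLast!_eq_getLast?_getD, hhead, hlast] using hends i
    · simpa [hij] using hends i

theorem IsKeyQuality.not_lt (hx : IsKeyQuality G s t x) {y : Fin k → ℕ}
    (hy : IsQuality G s t y) : ¬ y < x := fun hlt =>
  hx.2 ⟨y, hy, hlt.le, hlt.ne⟩

end Linkage

theorem stmt6_general {V : Type} [Inhabited V]
    (G : V → V → Prop)
    (k : ℕ) (s t : Fin k → V) (x : Fin k → ℕ) (hx : IsKeyQuality G s t x)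
    (L : Fin k → List V) (hL : IsLinkageFor G s t L) (hLx : ∀ i, (L i).length = x i)
    (j : Fin k) : IsMinimal G (L j) := by
  by_contra hmin
  obtain ⟨Q, hQ, hsub, hhead, hlast, hshorter⟩ :=
    (hL.1.1 j).exists_shorter_of_not_isMinimal hmin
  have hquality : IsQuality G s t (Function.update x j Q.length) := by
    refine ⟨_, hL.update_of_sublist hQ hsub hhead hlast, fun i => ?_⟩
    rcases eq_or_ne i j with rfl | hij
    · simp
    · simp [hij, hLx]
  exact hx.not_lt hquality (update_lt_self_iff.2 (hLx j ▸ hshorter))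

theorem stmt6 {V : Type} [Fintype V] [DecidableEq V] [Inhabited V]
    (G : V → V → Prop) (hG : Irreflexive G)
    (k : ℕ) (s t : Fin k → V) (x : Fin k → ℕ) (hx : IsKeyQuality G s t x)
    (L : Fin k → List V) (hL : IsLinkageFor G s t L) (hLx : ∀ i, (L i).length = x i)
    (j : Fin k) : IsMinimal G (L j) :=
  stmt6_general G k s t x hx L hL hLx j
end

section
/- Let (G,s_1,t_1,…,s_k,t_k) be a problem instance, let x be a key quality, and let L=(P_1,…,P_k) be an x-linkage for (G,s_1,t_1,…,s_k,t_k). Let 1 ≤ j ≤ k, and let B ⊆ V(P_j) be such that whenever uv is an edge of P_j with v ∈ B, also u ∈ B, and such that both Q = P_j|B and R = P_j|(V(P_j)∖B) are non-null. Then there is no planar (Q,R)-matching of cardinality 3 that is internally disjoint from L. -/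
open List

/-! Since `B` is closed under predecessors along `P = L j`, the path `P` is `Q` followed by `R`.
Let the middle member `M₁` of the matching run from `h ∈ Q` to `e ∈ R`. Planarity puts the start
of `M₂` after `h` on `Q` and the end of `M₀` before `e` on `R`, so at least two vertices of `P` lie
strictly between `h` and `e`, whereas `M₁` has at most one internal vertex, and it avoids the
linkage. Replacing that stretch of `P` by `M₁` gives a linkage for the same instance whose `j`-th
path is strictly shorter, contradicting that `x` is key. -/

namespace List

variable {α : Type*}

theorem filter_append_filter_not_of_isChain {p : α → Prop} [DecidablePred p] :
    ∀ {l : List α}, l.IsChain (fun u v => p v → p u) →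
      l.filter (fun v => p v) ++ l.filter (fun v => ¬ p v) = l
  | [], _ => rfl
  | a :: l, hl => by
    by_cases ha : p a
    · rw [filter_cons_of_pos (by simpa), filter_cons_of_neg (by simpa), cons_append,
        filter_append_filter_not_of_isChain (l := l) hl.tail]
    · have hnot : ∀ v ∈ a :: l, ¬ p v :=
        hl.induction _ _ (fun _ _ hxy hx hy => hx (hxy hy)) (fun _ => ha)
      rw [filter_eq_nil_iff.mpr fun v hv => by simpa using hnot v hv,
        filter_eq_self.mpr fun v hv => by simpa using hnot v hv, nil_append]

theorem exists_eq_append_cons_append_cons_of_pair_sublist {a b : α} {l : List α}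
    (h : [a, b] <+ l) : ∃ l₁ l₂ l₃, l = l₁ ++ a :: l₂ ++ b :: l₃ := by
  obtain ⟨r₁, r₂, rfl, ha, hb⟩ := append_sublist_iff.mp (show [a] ++ [b] <+ l from h)
  obtain ⟨l₁, l₂, rfl⟩ := append_of_mem (singleton_sublist.mp ha)
  obtain ⟨l₃, l₄, rfl⟩ := append_of_mem (singleton_sublist.mp hb)
  exact ⟨l₁, l₂ ++ l₃, l₄, by simp⟩

theorem exists_eq_head!_cons_append_getLast! [Inhabited α] {l : List α} (hl : 2 ≤ l.length) :
    ∃ Y, l = l.head! :: Y ++ [l.getLast!] ∧ Y.length + 2 = l.length := by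
  obtain ⟨a, l', rfl⟩ := exists_cons_of_length_pos (by omega : 0 < l.length)
  obtain ⟨Y, b, rfl⟩ := eq_nil_or_concat' l' |>.resolve_left (by rintro rfl; simp at hl)
  refine ⟨Y, ?_, by simp⟩
  rw [← cons_append, getLast!_eq_getLast?_getD, getLast?_concat]
  rfl

end List

section Paths

variable {V : Type} {G : V → V → Prop}

theorem IsPath.splice {A X Y D : List V} {h e : V} (hP : IsPath G (A ++ h :: X ++ e :: D))
    (hM : IsPath G (h :: Y ++ [e])) (hY : ∀ v ∈ Y, v ∉ A ++ h :: X ++ e :: D) :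
    IsPath G (A ++ h :: Y ++ e :: D) := by
  obtain ⟨-, hPnd, hPch : List.IsChain G _⟩ := hP
  obtain ⟨-, hMnd, hMch : List.IsChain G _⟩ := hM
  refine ⟨by simp, ?_, ?_⟩
  · have hsub : (A ++ h :: e :: D).Nodup := hPnd.sublist (by simp)
    have hperm : (A ++ h :: Y ++ e :: D).Perm (Y ++ (A ++ h :: e :: D)) := by
      simpa using (perm_append_comm (l₁ := A ++ [h]) (l₂ := Y)).append_right (e :: D)
    refine hperm.nodup_iff.mpr (nodup_append.mpr ⟨hMnd.sublist (by simp), hsub, ?_⟩)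
    rintro v hvY w hw rfl
    exact hY v hvY (by simp only [mem_append, mem_cons] at hw ⊢; tauto)
  · have h₁ : (A ++ [h]).IsChain G := hPch.prefix ⟨X ++ e :: D, by simp⟩
    have h₂ : (A ++ [h] ++ Y ++ [e]).IsChain G := by
      simpa using h₁.append_overlap (l₃ := Y ++ [e]) (by simpa using hMch) (by simp)
    have h₃ : ([e] ++ D).IsChain G := hPch.suffix ⟨A ++ h :: X, by simp⟩
    show List.IsChain G _
    simpa using h₂.append_overlap h₃ (by simp)

end Paths

section Linkages

variable {V : Type} {G : V → V → Prop} {k : ℕ}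

theorem mem_update_of_fresh {L : Fin k → List V} {j i : Fin k} {N : List V}
    (hfresh : ∀ v ∈ N, v ∈ L j ∨ ∀ i, v ∉ L i) {v : V} (hv : v ∈ Function.update L j N i) :
    v ∈ L i ∨ (i = j ∧ ∀ i, v ∉ L i) := by
  rcases eq_or_ne i j with rfl | hi
  · simpa using hfresh v (by simpa using hv)
  · exact Or.inl (by simpa [hi] using hv)

variable [Inhabited V]

theorem IsLinkageFor.update {s t : Fin k → V} {L : Fin k → List V} (hL : IsLinkageFor G s t L)
    {j : Fin k} {N : List V} (hN : IsPath G N) (hs : N.head! = s j) (ht : N.getLast! = t j)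
    (hfresh : ∀ v ∈ N, v ∈ L j ∨ ∀ i, v ∉ L i) :
    IsLinkageFor G s t (Function.update L j N) := by
  refine ⟨⟨fun i => ?_, fun i i' hii' v hv hv' => ?_⟩, fun i => ?_⟩
  · rcases eq_or_ne i j with rfl | hi
    · simpa using hN
    · simpa [hi] using hL.1.1 i
  · rcases mem_update_of_fresh hfresh hv with hvL | ⟨rfl, hfv⟩ <;>
      rcases mem_update_of_fresh hfresh hv' with hvL' | ⟨rfl, hfv'⟩
    exacts [hL.1.2 i i' hii' v hvL hvL', hfv' i hvL, hfv i' hvL', hii' rfl]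
  · rcases eq_or_ne i j with rfl | hi
    · simp only [Function.update_self]
      exact ⟨hs, ht⟩
    · simpa [hi] using hL.2 i

theorem IsKeyQuality.le_length_of_reroute {s t : Fin k → V} {x : Fin k → ℕ}
    (hx : IsKeyQuality G s t x) {L : Fin k → List V} (hL : IsLinkageFor G s t L)
    (hLx : ∀ i, (L i).length = x i) {j : Fin k} {N : List V} (hN : IsPath G N)
    (hs : N.head! = s j) (ht : N.getLast! = t j) (hfresh : ∀ v ∈ N, v ∈ L j ∨ ∀ i, v ∉ L i) :
    x j ≤ N.length := by
  by_contra! hlt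
  refine hx.2 ⟨Function.update x j N.length,
    ⟨Function.update L j N, hL.update hN hs ht hfresh, fun i => ?_⟩, fun i => ?_, fun h => ?_⟩
  · rcases eq_or_ne i j with rfl | hi
    · simp
    · simp [hi, hLx i]
  · rcases eq_or_ne i j with rfl | hi
    · simpa using hlt.le
    · simp [hi]
  · exact hlt.ne (by simpa using congrFun h j)

theorem IsLinkage.internal_of_mem_inner {n : ℕ} {M : Fin n → List V} (hM : IsLinkage G M)
    {i : Fin n} {Y : List V} (hi : M i = (M i).head! :: Y ++ [(M i).getLast!]) {v : V}
    (hv : v ∈ Y) : Internal M v := by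
  have hvi : v ∈ M i := by rw [hi]; simp [hv]
  refine ⟨⟨i, hvi⟩, fun i' => ?_⟩
  rcases eq_or_ne i' i with rfl | hi'
  · have hnd := (hM.1 i').2.1
    rw [hi] at hnd
    obtain ⟨hnd_init, -, hdisj⟩ := nodup_append.mp hnd
    constructor <;> rintro rfl
    · exact (nodup_cons.mp hnd_init).1 hv
    · exact hdisj _ (mem_cons_of_mem _ hv) _ (mem_singleton_self _) rfl
  · have hvi' : v ∉ M i' := hM.2 i i' hi'.symm v hvi
    have hne : M i' ≠ [] := (hM.1 i').1
    exact ⟨fun h => hvi' (h ▸ head!_mem_self hne),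
      fun h => hvi' (h ▸ by simp [getLast?_eq_some_getLast hne, getLast_mem])⟩

theorem IsKeyQuality.length_le_of_splice {s t : Fin k → V} {x : Fin k → ℕ}
    (hx : IsKeyQuality G s t x) {L : Fin k → List V} (hL : IsLinkageFor G s t L)
    (hLx : ∀ i, (L i).length = x i) {j : Fin k}
    {A X Y D : List V} {h e : V} (hP : L j = A ++ h :: X ++ e :: D)
    (hM : IsPath G (h :: Y ++ [e])) (hY : ∀ v ∈ Y, ∀ i, v ∉ L i) :
    X.length ≤ Y.length := by
  have hN : IsPath G (A ++ h :: Y ++ e :: D) :=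
    (hP ▸ hL.1.1 j).splice hM fun v hv => hP ▸ hY v hv j
  have hs : (A ++ h :: Y ++ e :: D).head! = s j := by
    rw [← (hL.2 j).1, hP]
    cases A <;> rfl
  have ht : (A ++ h :: Y ++ e :: D).getLast! = t j := by
    rw [← (hL.2 j).2, hP]
    simp only [getLast!_eq_getLast?_getD, getLast?_append_of_ne_nil _ (cons_ne_nil e D)]
  have hfresh : ∀ v ∈ A ++ h :: Y ++ e :: D, v ∈ L j ∨ ∀ i, v ∉ L i := by
    intro v hv
    by_cases hvY : v ∈ Y
    · exact Or.inr (hY v hvY)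
    · left
      rw [hP]
      simp only [mem_append, mem_cons] at hv ⊢
      tauto
  have hle := hx.le_length_of_reroute hL hLx hN hs ht hfresh
  rw [← hLx j, hP] at hle
  simp only [length_append, length_cons] at hle
  omega

end Linkages

theorem stmt7_general {V : Type} [DecidableEq V] [Inhabited V]
    (G : V → V → Prop)
    (k : ℕ) (s t : Fin k → V) (x : Fin k → ℕ) (hx : IsKeyQuality G s t x)
    (L : Fin k → List V) (hL : IsLinkageFor G s t L) (hLx : ∀ i, (L i).length = x i)
    (j : Fin k) (B : Finset V)
    (hBdown : ∀ u v : V, PEdge (L j) u v → v ∈ B → u ∈ B) :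
    ¬ ∃ M : Fin 3 → List V,
      IsPlanarMatching G ((L j).filter (· ∈ B)) ((L j).filter (· ∉ B)) M ∧
      InternallyDisjointFrom M L := by
  rintro ⟨M, ⟨hM, hMlen, hheads, hlasts⟩, hint⟩
  obtain ⟨Y, hM1, hY⟩ :=
    (M 1).exists_eq_head!_cons_append_getLast! (by have := hMlen 1; omega)
  simp only [List.ofFn_succ, List.ofFn_zero, Fin.succ_zero_eq_one, Fin.succ_one_eq_two]
    at hheads hlasts
  obtain ⟨A, Q₂, Q₃, hQ⟩ := exists_eq_append_cons_append_cons_of_pair_sublist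
    ((sublist_cons_self _ _).trans hheads)
  obtain ⟨R₁, R₂, D, hR⟩ := exists_eq_append_cons_append_cons_of_pair_sublist
    ((sublist_append_left [_, _] [_]).trans hlasts)
  have hP : L j = A ++ (M 1).head! :: (Q₂ ++ (M 2).head! :: Q₃ ++ R₁ ++ (M 0).getLast! :: R₂) ++
      (M 1).getLast! :: D := by
    rw [← filter_append_filter_not_of_isChain ((isChain_isInfix (L j)).imp hBdown), hQ, hR]
    simp
  have hle := hx.length_le_of_splice hL hLx hP (hM1 ▸ hM.1 1)
    fun v hv => hint v (hM.internal_of_mem_inner hM1 hv)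
  simp only [length_append, length_cons] at hle
  have := hMlen 1
  omega

theorem stmt7 {V : Type} [Fintype V] [DecidableEq V] [Inhabited V]
    (G : V → V → Prop) (hG : Irreflexive G)
    (k : ℕ) (s t : Fin k → V) (x : Fin k → ℕ) (hx : IsKeyQuality G s t x)
    (L : Fin k → List V) (hL : IsLinkageFor G s t L) (hLx : ∀ i, (L i).length = x i)
    (j : Fin k) (B : Finset V) (hBsub : ∀ v ∈ B, v ∈ L j)
    (hBdown : ∀ u v : V, PEdge (L j) u v → v ∈ B → u ∈ B)
    (hQ : (L j).filter (· ∈ B) ≠ []) (hR : (L j).filter (· ∉ B) ≠ []) :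
    ¬ ∃ M : Fin 3 → List V,
      IsPlanarMatching G ((L j).filter (· ∈ B)) ((L j).filter (· ∉ B)) M ∧
      InternallyDisjointFrom M L :=
  stmt7_general G k s t x hx L hL hLx j B hBdown
end

section
/- Let d ≥ 1 and c ≥ 1 be integers, let G be a d-path-dominant digraph, let Q be a minimal path of G with exactly cd vertices, and let x_1,…,x_c be distinct vertices of G not belonging to V(Q), each of which is Q-outward. Then there exist vertices y_1,…,y_c of Q, distinct and occurring in that order along Q, such that y_jx_j is an edge of G for 1 ≤ j ≤ c; moreover y_j can be chosen among the ((j−1)d+1)-th through (jd)-th vertices of Q. -/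
open List

/-! Cut `Q` into `c` consecutive blocks of `d` vertices. Each block is a minimal path with `d`
vertices, so by path-dominance `x_j` lies on, sends an edge to, or receives an edge from block `j`;
being `Q`-outward leaves only the last option. Choosing `y_j` in block `j` makes the `y_j`
increase along `Q`. -/

theorem List.ofFn_get_sublist_of_strictMono {α : Type*} {n : ℕ} {l : List α}
    {f : Fin n → Fin l.length} (hf : StrictMono f) : List.ofFn (fun i => l.get (f i)) <+ l :=
  List.sublist_iff_exists_fin_orderEmbedding_get_eq.2
    ⟨OrderEmbedding.ofStrictMono (fun i => f (Fin.cast List.length_ofFn i)) fun _ _ h => hf h,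
      fun _ => List.get_ofFn _ _⟩

section Paths

variable {V : Type} {G : V → V → Prop}

theorem IsPath.of_infix {P S : List V} (hP : IsPath G P) (hS : S <:+: P) (hne : S ≠ []) :
    IsPath G S :=
  ⟨hne, hP.2.1.sublist hS.sublist, hP.2.2.infix hS⟩

theorem IsMinimal.drop {P : List V} (hP : IsMinimal G P) (k : ℕ) : IsMinimal G (P.drop k) := by
  intro i j hij
  have hi := i.2
  have hj := j.2
  simp only [List.length_drop] at hi hj
  have := hP ⟨k + i, by omega⟩ ⟨k + j, by omega⟩ (by simpa using hij)
  simp only at this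
  omega

theorem IsMinimal.take {P : List V} (hP : IsMinimal G P) (k : ℕ) : IsMinimal G (P.take k) := by
  intro i j hij
  have hi := i.2
  have hj := j.2
  simp only [List.length_take] at hi hj
  exact hP ⟨i, by omega⟩ ⟨j, by omega⟩ (by simpa using hij)

theorem Outward.of_subset {P S : List V} {v : V} (hv : Outward G P v) (hS : S ⊆ P) :
    Outward G S v :=
  ⟨fun h => hv.1 (hS h), fun w hw => hv.2 w (hS hw)⟩

theorem PathDominant.exists_adj_of_outward {d : ℕ} (hdom : PathDominant d G) {P : List V}
    (hP : IsPath G P) (hPmin : IsMinimal G P) (hlen : P.length = d) {v : V}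
    (hv : Outward G P v) : ∃ w ∈ P, G w v := by
  rcases hdom P hP hPmin hlen v with hmem | ⟨w, hw, hvw⟩ | hin
  · exact absurd hmem hv.1
  · exact absurd hvw (hv.2 w hw)
  · exact hin

theorem PathDominant.exists_adj_in_block_of_outward {d : ℕ} (hdom : PathDominant d G)
    (hd : 0 < d) {Q : List V} (hQ : IsPath G Q) (hQmin : IsMinimal G Q) {j : ℕ}
    (hj : (j + 1) * d ≤ Q.length) {v : V} (hv : Outward G Q v) :
    ∃ i : Fin Q.length, j * d ≤ i ∧ i < (j + 1) * d ∧ G (Q.get i) v := by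
  set S := (Q.drop (j * d)).take d with hS
  have hSinf : S <:+: Q := (List.take_prefix _ _).isInfix.trans (List.drop_suffix _ _).isInfix
  have hSlen : S.length = d := by
    simp only [hS, List.length_take, List.length_drop, Nat.succ_mul] at hj ⊢
    omega
  have hSpath : IsPath G S := hQ.of_infix hSinf (List.ne_nil_of_length_pos (hSlen ▸ hd))
  obtain ⟨w, hw, hwv⟩ := hdom.exists_adj_of_outward hSpath ((hQmin.drop _).take _) hSlen
    (hv.of_subset hSinf.subset)
  obtain ⟨p, hp, rfl⟩ := List.mem_iff_getElem.1 hw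
  rw [hSlen] at hp
  rw [Nat.succ_mul] at hj ⊢
  exact ⟨⟨j * d + p, by omega⟩, by simp, by simp only; omega, by simpa [hS] using hwv⟩

end Paths

theorem stmt9_general {V : Type}
    (G : V → V → Prop)
    (d c : ℕ) (hdom : PathDominant d G)
    (Q : List V) (hQ : IsPath G Q) (hQmin : IsMinimal G Q) (hQlen : Q.length = c * d)
    (x : Fin c → V)
    (hout : ∀ j, Outward G Q (x j)) :
    ∃ y : Fin c → V, (List.ofFn y).Sublist Q ∧ (∀ j, G (y j) (x j)) ∧
      ∀ j : Fin c, ∃ i : Fin Q.length, Q.get i = y j ∧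
        (j : ℕ) * d ≤ (i : ℕ) ∧ (i : ℕ) < ((j : ℕ) + 1) * d := by
  have hd : 0 < d := by
    have := List.length_pos_of_ne_nil hQ.1
    rw [hQlen] at this
    exact Nat.pos_of_mul_pos_left this
  have hblock (j : Fin c) : ((j : ℕ) + 1) * d ≤ Q.length :=
    hQlen ▸ Nat.mul_le_mul_right d j.2
  choose f hf_lo hf_hi hf_adj using fun j =>
    hdom.exists_adj_in_block_of_outward hd hQ hQmin (hblock j) (hout j)
  have hf : StrictMono f := fun a b hab => by
    have : ((a : ℕ) + 1) * d ≤ b * d := Nat.mul_le_mul_right d hab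
    have := hf_hi a
    have := hf_lo b
    exact Fin.lt_def.2 (by omega)
  exact ⟨fun j => Q.get (f j), List.ofFn_get_sublist_of_strictMono hf, hf_adj,
    fun j => ⟨f j, rfl, hf_lo j, hf_hi j⟩⟩

theorem stmt9 {V : Type} [Fintype V] [DecidableEq V] [Inhabited V]
    (G : V → V → Prop) (hG : Irreflexive G)
    (d c : ℕ) (hd : 1 ≤ d) (hc : 1 ≤ c) (hdom : PathDominant d G)
    (Q : List V) (hQ : IsPath G Q) (hQmin : IsMinimal G Q) (hQlen : Q.length = c * d)
    (x : Fin c → V) (hinj : Function.Injective x)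
    (hout : ∀ j, Outward G Q (x j)) :
    ∃ y : Fin c → V, (List.ofFn y).Sublist Q ∧ (∀ j, G (y j) (x j)) ∧
      ∀ j : Fin c, ∃ i : Fin Q.length, Q.get i = y j ∧
        (j : ℕ) * d ≤ (i : ℕ) ∧ (i : ℕ) < ((j : ℕ) + 1) * d :=
  stmt9_general G d c hdom Q hQ hQmin hQlen x hout
end

section
/- Let k,m,c ≥ 0, let (G,s_1,t_1,…,s_k,t_k) be a problem instance, and let (L_1,X_1,Y_1),…,(L_n,X_n,Y_n) be (k,m,c)-rails in it with (L_p,X_p,Y_p)→(L_{p+1},X_{p+1},Y_{p+1}) for 1 ≤ p ≤ n−1, where L_p=(M_{p,1},…,M_{p,k}). For 1 ≤ p ≤ n and 1 ≤ j ≤ k let P_{p,j} be the union of M_{1,j},…,M_{p,j}. Then every vertex of P_{p,j} belongs to Y_p ∪ V(M_{p,j}). -/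
open List

theorem stmt11 {V : Type} [Fintype V] [DecidableEq V] [Inhabited V]
    (G : V → V → Prop) (hG : Irreflexive G)
    (k m c : ℕ) (s t : Fin k → V) (n : ℕ)
    (M : ℕ → Fin k → List V) (X Y : ℕ → Set V)
    (hrail : ∀ p < n, IsRail G s t m c (M p) (X p) (Y p))
    (hstep : ∀ p, p + 1 < n → RailStep G (M p, X p, Y p) (M (p+1), X (p+1), Y (p+1))) :
    ∀ p < n, ∀ j : Fin k, ∀ v : V, (∃ q ≤ p, v ∈ M q j) → v ∈ Y p ∨ v ∈ M p j := by
  intro p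
  induction p with
  | zero =>
    rintro hp j v ⟨q, hq, hv⟩
    have : q = 0 := Nat.le_zero.mp hq
    subst this
    exact Or.inr hv
  | succ p ih =>
    rintro hp j v ⟨q, hq, hv⟩
    rcases Nat.lt_or_ge q (p + 1) with h | h
    · have hp' : p < n := Nat.lt_of_succ_lt hp
      have hs := hstep p hp
      rcases ih hp' j v ⟨q, Nat.lt_succ_iff.mp h, hv⟩ with hY | hM
      · exact Or.inl (hs.2.2.2.2.2 hY)
      · rcases hs.2.2.2.1 j v hM with h1 | h1
        · exact Or.inr h1
        · exact Or.inl h1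
    · have : q = p + 1 := le_antisymm hq h
      subst this
      exact Or.inr hv
end

section
/- Let k,m,c ≥ 0, let (G,s_1,t_1,…,s_k,t_k) be a problem instance, and let (L_1,X_1,Y_1),…,(L_n,X_n,Y_n) be (k,m,c)-rails in it with (L_p,X_p,Y_p)→(L_{p+1},X_{p+1},Y_{p+1}) for 1 ≤ p ≤ n−1, where L_p=(M_{p,1},…,M_{p,k}). For 1 ≤ p ≤ n and 1 ≤ j ≤ k let P_{p,j} be the union of M_{1,j},…,M_{p,j}. Then for each p, the digraphs P_{p,1},…,P_{p,k} are pairwise vertex-disjoint. -/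
open List

theorem stmt13 {V : Type} [Fintype V] [DecidableEq V] [Inhabited V]
    (G : V → V → Prop) (hG : Irreflexive G)
    (k m c : ℕ) (s t : Fin k → V) (n : ℕ)
    (M : ℕ → Fin k → List V) (X Y : ℕ → Set V)
    (hrail : ∀ p < n, IsRail G s t m c (M p) (X p) (Y p))
    (hstep : ∀ p, p + 1 < n → RailStep G (M p, X p, Y p) (M (p+1), X (p+1), Y (p+1))) :
    ∀ p < n, ∀ j j' : Fin k, j ≠ j' → ∀ v : V,
      (∃ q ≤ p, v ∈ M q j) → ¬ (∃ q ≤ p, v ∈ M q j') := by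
  intro p hp j j' hjj v hvj hvj'
  obtain ⟨q, hq, hv⟩ := hvj
  obtain ⟨q', hq', hv'⟩ := hvj'
  have key : ∀ q (j : Fin k) v, v ∈ M q j → ∀ r, q ≤ r → r < n → v ∈ M r j ∨ v ∈ Y r := by
    intro q j v hv r
    induction r with
    | zero =>
      intro h1 _
      have : q = 0 := Nat.le_zero.mp h1
      subst this; exact Or.inl hv
    | succ r ih =>
      intro h1 h2
      by_cases hq : q = r + 1
      · subst hq; exact Or.inl hv
      · have hqr : q ≤ r := by omega
        have hrn : r < n := by omega
        rcases ih hqr hrn with h | h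
        · exact (hstep r h2).2.2.2.1 j v h
        · exact Or.inr ((hstep r h2).2.2.2.2.2 h)
  have main : ∀ q q' (j j' : Fin k), j ≠ j' → q ≤ q' → q' < n →
      v ∈ M q j → v ∈ M q' j' → False := by
    intro q q' j j' hjj hqq hq'n hv hv'
    rcases key q j v hv q' hqq hq'n with h | h
    · exact (hrail q' hq'n).1.2 j j' hjj v h hv'
    · exact ((hrail q' hq'n).2.2.2.2.2.1 h).1 j' hv'
  rcases le_total q q' with h | h
  · exact main q q' j j' hjj h (lt_of_le_of_lt hq' hp) hv hv'
  · exact main q' q j' j (Ne.symm hjj) h (lt_of_le_of_lt hq hp) hv' hv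
end

section
/- Let k,m,c ≥ 0, let (G,s_1,t_1,…,s_k,t_k) be a problem instance, and let (L_0,X_0,Y_0),…,(L_r,X_r,Y_r) be (k,m,c)-rails in it such that for each p with 0 ≤ p ≤ r−1, either (L_p,X_p,Y_p)=(L_{p+1},X_{p+1},Y_{p+1}) or (L_p,X_p,Y_p)→(L_{p+1},X_{p+1},Y_{p+1}). If (L_0,X_0,Y_0)=(L_r,X_r,Y_r), then (L_q,X_q,Y_q)=(L_0,X_0,Y_0) for all q with 0 ≤ q ≤ r. -/
open List

lemma pedge_cons_cases {V : Type} {a : V} {W : List V} {u v : V}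
    (h : PEdge (a :: W) u v) : (u = a ∧ v ∈ W) ∨ PEdge W u v := by
  obtain ⟨s, t, hst⟩ := h
  cases s with
  | nil =>
    simp only [List.nil_append, List.cons_append] at hst
    obtain ⟨rfl, hW⟩ := List.cons.injEq .. ▸ hst
    exact Or.inl ⟨rfl, by rw [← hW]; simp⟩
  | cons b s' =>
    simp only [List.cons_append] at hst
    exact Or.inr ⟨s', t, (List.cons.injEq .. ▸ hst).2⟩

lemma pedge_mem_right {V : Type} {W : List V} {u v : V} (h : PEdge W u v) : v ∈ W :=
  h.subset (by simp)

lemma pedge_mem_left {V : Type} {W : List V} {u v : V} (h : PEdge W u v) : u ∈ W :=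
  h.subset (by simp)

lemma exists_pedge_of_mem_tail {V : Type} :
    ∀ (W : List V) (a v : V), v ∈ W → ∃ u, PEdge (a :: W) u v := by
  intro W
  induction W with
  | nil => intro a v hv; simp at hv
  | cons b W' ih =>
    intro a v hv
    rcases List.mem_cons.mp hv with rfl | hv'
    · exact ⟨a, [], W', rfl⟩
    · obtain ⟨u, hu⟩ := ih b v hv'
      exact ⟨u, hu.trans (List.infix_cons (List.infix_refl _))⟩

lemma list_eq_of_mem_iff_edge_sub {V : Type} :
    ∀ (P W : List V), P.Nodup → W.Nodup →
    (∀ v, v ∈ P ↔ v ∈ W) → (∀ u v, PEdge P u v → PEdge W u v) → P = W := by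
  intro P
  induction P with
  | nil =>
    intro W _ _ hmem _
    exact (List.eq_nil_iff_forall_not_mem.mpr fun v hv => by simpa using (hmem v).mpr hv).symm
  | cons a P₁ ih =>
    intro W hP hW hmem hedge
    cases W with
    | nil => exact absurd ((hmem a).mp (by simp)) (by simp)
    | cons b W₁ =>
      have hab : a = b := by
        by_contra hne
        have hbP : b ∈ a :: P₁ := (hmem b).mpr (by simp)
        have hbP₁ : b ∈ P₁ := (List.mem_cons.mp hbP).resolve_left (Ne.symm hne)
        obtain ⟨u, hu⟩ := exists_pedge_of_mem_tail P₁ a b hbP₁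
        have := hedge u b hu
        rcases pedge_cons_cases this with ⟨_, hbW₁⟩ | h2
        · exact (List.nodup_cons.mp hW).1 hbW₁
        · exact (List.nodup_cons.mp hW).1 (pedge_mem_right h2)
      subst hab
      have hPn := List.nodup_cons.mp hP
      have hWn := List.nodup_cons.mp hW
      have hmem₁ : ∀ v, v ∈ P₁ ↔ v ∈ W₁ := by
        intro v
        constructor
        · intro hv
          rcases List.mem_cons.mp ((hmem v).mp (List.mem_cons_of_mem a hv)) with rfl | h
          · exact absurd hv hPn.1
          · exact h
        · intro hv
          rcases List.mem_cons.mp ((hmem v).mpr (List.mem_cons_of_mem a hv)) with rfl | h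
          · exact absurd hv hWn.1
          · exact h
      have hedge₁ : ∀ u v, PEdge P₁ u v → PEdge W₁ u v := by
        intro u v huv
        have h1 : PEdge (a :: P₁) u v := huv.trans (List.infix_cons (List.infix_refl _))
        rcases pedge_cons_cases (hedge u v h1) with ⟨rfl, _⟩ | h2
        · exact absurd (pedge_mem_left huv) hPn.1
        · exact h2
      rw [ih W₁ hPn.2 hWn.2 hmem₁ hedge₁]


theorem stmt14 {V : Type} [Fintype V] [DecidableEq V] [Inhabited V]
    (G : V → V → Prop) (hG : Irreflexive G)
    (k m c : ℕ) (s t : Fin k → V)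
    (Rl : ℕ → RailT V k) (r : ℕ)
    (hrail : ∀ p ≤ r, IsRail G s t m c (Rl p).1 (Rl p).2.1 (Rl p).2.2)
    (hstep : ∀ p < r, Rl p = Rl (p+1) ∨ RailStep G (Rl p) (Rl (p+1)))
    (hend : Rl 0 = Rl r) :
    ∀ q ≤ r, Rl q = Rl 0 := by
  -- X is monotone decreasing, Y monotone increasing along steps
  have hXstep : ∀ p < r, (Rl (p+1)).2.1 ⊆ (Rl p).2.1 := by
    intro p hp
    rcases hstep p hp with h | h
    · rw [h]
    · exact h.2.2.2.2.1
  have hYstep : ∀ p < r, (Rl p).2.2 ⊆ (Rl (p+1)).2.2 := by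
    intro p hp
    rcases hstep p hp with h | h
    · rw [h]
    · exact h.2.2.2.2.2
  have hXmono : ∀ n p, p + n ≤ r → (Rl (p+n)).2.1 ⊆ (Rl p).2.1 := by
    intro n
    induction n with
    | zero => intro p _; exact subset_rfl
    | succ n ih =>
      intro p h
      have h1 : p + n < r := by omega
      have := hXstep (p+n) h1
      exact (show Rl (p + (n+1)) = Rl (p+n+1) by ring_nf).symm ▸ (this.trans (ih p (le_of_lt h1)))
  have hYmono : ∀ n p, p + n ≤ r → (Rl p).2.2 ⊆ (Rl (p+n)).2.2 := by
    intro n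
    induction n with
    | zero => intro p _; exact subset_rfl
    | succ n ih =>
      intro p h
      have h1 : p + n < r := by omega
      have := hYstep (p+n) h1
      exact (show Rl (p + (n+1)) = Rl (p+n+1) by ring_nf).symm ▸ ((ih p (le_of_lt h1)).trans this)
  have hXeq : ∀ q ≤ r, (Rl q).2.1 = (Rl 0).2.1 := by
    intro q hq
    apply Set.Subset.antisymm
    · have := hXmono q 0 (by omega); simpa using this
    · have := hXmono (r - q) q (by omega)
      rw [show q + (r - q) = r by omega] at this
      rw [hend]; exact this
  have hYeq : ∀ q ≤ r, (Rl q).2.2 = (Rl 0).2.2 := by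
    intro q hq
    apply Set.Subset.antisymm
    · have := hYmono (r - q) q (by omega)
      rw [show q + (r - q) = r by omega] at this
      rw [hend]; exact this
    · have := hYmono q 0 (by omega); simpa using this
  -- every step must be trivial
  have key : ∀ p < r, Rl (p+1) = Rl p := by
    intro p hp
    rcases hstep p hp with h | h
    · exact h.symm
    · exfalso
      obtain ⟨hne, hW, hXf, hYf, _, _⟩ := h
      apply hne
      have hp1 : p + 1 ≤ r := hp
      have hpr : p ≤ r := le_of_lt hp
      have hXpq : (Rl p).2.1 = (Rl (p+1)).2.1 := by
        rw [hXeq p hpr, hXeq (p+1) hp1]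
      have hYpq : (Rl p).2.2 = (Rl (p+1)).2.2 := by
        rw [hYeq p hpr, hYeq (p+1) hp1]
      have hrA : (Rl (p+1)).2.1 ⊆ RailA G t (Rl (p+1)).1 := (hrail (p+1) hp1).2.2.2.2.1
      have hrB : (Rl p).2.2 ⊆ RailB G s (Rl p).1 := (hrail p hpr).2.2.2.2.2.1
      -- membership transfer
      have hP'P : ∀ i, ∀ v ∈ (Rl (p+1)).1 i, v ∈ (Rl p).1 i := by
        intro i v hv
        rcases hXf i v hv with h1 | h1
        · exact h1
        · exact absurd hv ((hrA (hXpq ▸ h1)).1 i)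
      have hPP' : ∀ i, ∀ v ∈ (Rl p).1 i, v ∈ (Rl (p+1)).1 i := by
        intro i v hv
        rcases hYf i v hv with h1 | h1
        · exact h1
        · exact absurd hv ((hrB (hYpq ▸ h1)).1 i)
      have hL : (Rl p).1 = (Rl (p+1)).1 := by
        funext i
        obtain ⟨W, hWpath, _, _, hWmem, hWedge⟩ := hW i
        have hWnd : W.Nodup := hWpath.2.1
        have hPnd : ((Rl p).1 i).Nodup := ((hrail p hpr).1.1 i).2.1
        have hP'nd : ((Rl (p+1)).1 i).Nodup := ((hrail (p+1) hp1).1.1 i).2.1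
        have e1 : (Rl p).1 i = W :=
          list_eq_of_mem_iff_edge_sub _ _ hPnd hWnd
            (fun v => ⟨fun hv => (hWmem v).mpr (Or.inl hv),
              fun hv => (hWmem v).mp hv |>.elim id (hP'P i v)⟩)
            (fun u v huv => (hWedge u v).mpr (Or.inl huv))
        have e2 : (Rl (p+1)).1 i = W :=
          list_eq_of_mem_iff_edge_sub _ _ hP'nd hWnd
            (fun v => ⟨fun hv => (hWmem v).mpr (Or.inr hv),
              fun hv => (hWmem v).mp hv |>.elim (hPP' i v) id⟩)
            (fun u v huv => (hWedge u v).mpr (Or.inr huv))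
        rw [e1, e2]
      exact Prod.ext hL (Prod.ext hXpq hYpq)
  -- conclude by induction
  intro q
  induction q with
  | zero => intro _; rfl
  | succ q ih =>
    intro hq
    rw [key q (by omega), ih (by omega)]
end

section
/- A digraph G is 2-path-dominant if and only if the underlying simple graph of G (in which distinct vertices u,v are adjacent if and only if at least one of uv, vu is an edge of G) is complete multipartite, i.e., non-adjacency in the underlying simple graph is an equivalence relation on V(G) (equivalently, the complement of the underlying simple graph is a disjoint union of complete graphs). -/
open List

/-! A two-vertex path is just an edge `ab`, and it is automatically minimal. It dominates `v`
exactly when `v` is adjacent to `a` or to `b` in the underlying simple graph (for `v = a` this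
is the edge `ab` itself). So 2-path-dominance says that no vertex is non-adjacent to both ends
of an edge, which is the contrapositive of transitivity of non-adjacency. -/

namespace SimpleGraph

variable {V : Type*} (H : SimpleGraph V)

theorem isCompleteMultipartite_iff_equivalence :
    H.IsCompleteMultipartite ↔ Equivalence (¬ H.Adj · ·) :=
  ⟨fun h => h.setoid.iseqv, fun h => ⟨fun _ _ _ => h.trans⟩⟩

theorem isCompleteMultipartite_iff_adj_or_adj_of_adj :
    H.IsCompleteMultipartite ↔ ∀ a b v, H.Adj a b → H.Adj v a ∨ H.Adj v b := by
  refine ⟨fun h a b v hab => ?_, fun h => ⟨fun a v b nav nvb hab => ?_⟩⟩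
  · by_contra! hv
    exact h.trans a v b (fun hav => hv.1 hav.symm) hv.2 hab
  · rcases h a b v hab with hva | hvb
    exacts [nav hva.symm, nvb hvb]

end SimpleGraph

open SimpleGraph

section PairPath

variable {V : Type} {G : V → V → Prop} {a b : V}

theorem isPath_pair_iff : IsPath G [a, b] ↔ a ≠ b ∧ G a b :=
  ⟨fun ⟨_, hnd, hch⟩ => ⟨by simpa using hnd, List.isChain_pair.1 hch⟩,
    fun ⟨hab, h⟩ => ⟨List.cons_ne_nil _ _, by simpa using hab, List.isChain_pair.2 h⟩⟩

theorem isMinimal_of_length_le_two {P : List V} (hP : P.length ≤ 2) : IsMinimal G P :=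
  fun i j _ => by omega

theorem dominated_pair_iff (hab : a ≠ b) (h : G a b ∨ G b a) (v : V) :
    (v ∈ [a, b] ∨ (∃ w ∈ [a, b], G v w) ∨ ∃ w ∈ [a, b], G w v) ↔
      (fromRel G).Adj v a ∨ (fromRel G).Adj v b := by
  by_cases hva : v = a
  · subst hva
    simp [hab, h]
  by_cases hvb : v = b
  · subst hvb
    simp [hab.symm, h.symm]
  simp only [List.mem_pair, or_and_right, exists_or, exists_eq_left, hva, hvb, fromRel_adj,
    ne_eq, not_false_eq_true, true_and, or_self, false_or]
  tauto

end PairPath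

theorem pathDominant_two_iff {V : Type} (G : V → V → Prop) :
    PathDominant 2 G ↔
      ∀ a b v, (fromRel G).Adj a b → (fromRel G).Adj v a ∨ (fromRel G).Adj v b := by
  constructor
  · intro hG a b v ⟨hab, h⟩
    wlog hab' : G a b generalizing a b
    · exact (this b a hab.symm h.symm (h.resolve_left hab')).symm
    exact (dominated_pair_iff hab h v).1 <|
      hG [a, b] (isPath_pair_iff.2 ⟨hab, hab'⟩) (isMinimal_of_length_le_two le_rfl) rfl v
  · rintro hG P hP - hlen v
    obtain ⟨a, b, rfl⟩ := List.length_eq_two.1 hlen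
    obtain ⟨hab, h⟩ := isPath_pair_iff.1 hP
    exact (dominated_pair_iff hab (.inl h) v).2 (hG a b v ⟨hab, .inl h⟩)

theorem stmt15_general {V : Type}
    (G : V → V → Prop) :
    PathDominant 2 G ↔ Equivalence (fun u v : V => ¬ (u ≠ v ∧ (G u v ∨ G v u))) := by
  rw [pathDominant_two_iff, ← isCompleteMultipartite_iff_adj_or_adj_of_adj,
    isCompleteMultipartite_iff_equivalence]
  rfl

theorem stmt15 {V : Type} [Fintype V] [DecidableEq V] [Inhabited V]
    (G : V → V → Prop) (hG : Irreflexive G) :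
    PathDominant 2 G ↔ Equivalence (fun u v : V => ¬ (u ≠ v ∧ (G u v ∨ G v u))) :=
  stmt15_general G
end
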